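/- arXiv:2109.08559 — 4 statements merged into one kernel-verified Lean document; each statement's English description precedes it below -/
import Mathlib

section
/- Let (Z, δ) be a compact metric space, let (z_i)_{i∈ℕ} be a dense sequence in Z, let G be a subgroup of the group of homeomorphisms of Z (acting on Z by evaluation), and let d be a right-invariant metric on G, i.e., d(h₁ ∘ g, h₂ ∘ g) = d(h₁, h₂) for all h₁, h₂, g ∈ G. Then for all z, z' ∈ Z the following are equivalent: (i) there exists a bijection f : G → G which is an isometry for d and satisfies δ(f(h)(z'), z_i) = δ(h(z), z_i) for all h ∈ G and all i ∈ ℕ; (ii) z and z' lie in the same G-orbit, i.e., there exists g ∈ G with g(z') = z. -/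
theorem DenseRange.eq_of_forall_dist_eq {X ι : Type*} [MetricSpace X] {z : ι → X}
    (hz : DenseRange z) {a b : X} (h : ∀ i, dist a (z i) = dist b (z i)) : a = b := by
  have hdist : (dist a ·) = (dist b ·) := hz.equalizer (by fun_prop) (by fun_prop) (funext h)
  simpa using congrFun hdist b

def precompEquiv {Z : Type*} [TopologicalSpace Z] {G : Set (Z ≃ₜ Z)}
    (hcomp : ∀ g h : Z ≃ₜ Z, g ∈ G → h ∈ G → g.trans h ∈ G)
    (hsymm : ∀ g : Z ≃ₜ Z, g ∈ G → g.symm ∈ G) (g : G) : G ≃ G where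
  toFun h := ⟨(g : Z ≃ₜ Z).trans h, hcomp _ _ g.2 h.2⟩
  invFun h := ⟨(g : Z ≃ₜ Z).symm.trans h, hcomp _ _ (hsymm _ g.2) h.2⟩
  left_inv h := by ext; simp
  right_inv h := by ext; simp

theorem isom_of_structures_iff_same_orbit_general
    {Z : Type} [MetricSpace Z]
    (z : ℕ → Z) (hz : DenseRange z)
    (G : Set (Z ≃ₜ Z))
    (hone : Homeomorph.refl Z ∈ G)
    (hcomp : ∀ g h : Z ≃ₜ Z, g ∈ G → h ∈ G → g.trans h ∈ G)
    (hsymm : ∀ g : Z ≃ₜ Z, g ∈ G → g.symm ∈ G)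
    (d : ↥G → ↥G → ℝ)
    (hdinv : ∀ h₁ h₂ g : ↥G,
      d ⟨(g : Z ≃ₜ Z).trans (h₁ : Z ≃ₜ Z), hcomp _ _ g.2 h₁.2⟩
        ⟨(g : Z ≃ₜ Z).trans (h₂ : Z ≃ₜ Z), hcomp _ _ g.2 h₂.2⟩ = d h₁ h₂)
    (x x' : Z) :
    (∃ f : ↥G → ↥G,
      Function.Bijective f ∧
      (∀ h₁ h₂ : ↥G, d (f h₁) (f h₂) = d h₁ h₂) ∧
      (∀ (h : ↥G) (i : ℕ), dist ((f h : Z ≃ₜ Z) x') (z i) = dist ((h : Z ≃ₜ Z) x) (z i))) ↔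
    ∃ g : ↥G, (g : Z ≃ₜ Z) x' = x := by
  constructor
  · rintro ⟨f, -, -, hf⟩
    exact ⟨f ⟨Homeomorph.refl Z, hone⟩, hz.eq_of_forall_dist_eq (hf _)⟩
  · rintro ⟨g, rfl⟩
    exact ⟨precompEquiv hcomp hsymm g, (precompEquiv hcomp hsymm g).bijective,
      fun h₁ h₂ => hdinv h₁ h₂ g, fun _ _ => rfl⟩

theorem isom_of_structures_iff_same_orbit
    {Z : Type} [MetricSpace Z] [CompactSpace Z]
    (z : ℕ → Z) (hz : DenseRange z)
    (G : Set (Z ≃ₜ Z))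
    (hone : Homeomorph.refl Z ∈ G)
    (hcomp : ∀ g h : Z ≃ₜ Z, g ∈ G → h ∈ G → g.trans h ∈ G)
    (hsymm : ∀ g : Z ≃ₜ Z, g ∈ G → g.symm ∈ G)
    (d : ↥G → ↥G → ℝ)
    (hd0 : ∀ a b : ↥G, d a b = 0 ↔ a = b)
    (hdsymm : ∀ a b : ↥G, d a b = d b a)
    (hdtri : ∀ a b c : ↥G, d a c ≤ d a b + d b c)
    (hdinv : ∀ h₁ h₂ g : ↥G,
      d ⟨(g : Z ≃ₜ Z).trans (h₁ : Z ≃ₜ Z), hcomp _ _ g.2 h₁.2⟩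
        ⟨(g : Z ≃ₜ Z).trans (h₂ : Z ≃ₜ Z), hcomp _ _ g.2 h₂.2⟩ = d h₁ h₂)
    (x x' : Z) :
    (∃ f : ↥G → ↥G,
      Function.Bijective f ∧
      (∀ h₁ h₂ : ↥G, d (f h₁) (f h₂) = d h₁ h₂) ∧
      (∀ (h : ↥G) (i : ℕ), dist ((f h : Z ≃ₜ Z) x') (z i) = dist ((h : Z ≃ₜ Z) x) (z i))) ↔
    ∃ g : ↥G, (g : Z ≃ₜ Z) x' = x :=
  isom_of_structures_iff_same_orbit_general z hz G hone hcomp hsymm d hdinv x x'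
end

section
/- Let (Z, d) be a locally compact metric space. Then for every z₀ ∈ Z the pseudo-component C[z₀] is both open and closed in Z. In particular, every nonempty connected locally compact metric space is pseudo-connected. -/
/-!
If `z ∈ C[z₀]` and the closed ball of radius `r` about `z` is compact, then `ρ(z) ≥ r`, so the
whole open ball of radius `r` about `z` lies in `C[z₀]`; local compactness provides such an `r > 0`
at every point, which makes `C[z₀]` open. If `z` lies in the closure of `C[z₀]` and the closed
`r`-ball about `z` is compact, pick `u ∈ C[z₀]` with `d(u, z) < r / 2`: the closed `r / 2`-ball
about `u` is a closed subset of that compact ball, so `z` lies in the open `r / 2`-ball about `u`,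
hence in `C[z₀]`.
-/

noncomputable def rho {Z : Type*} [PseudoMetricSpace Z] (z : Z) : ENNReal :=
  ⨆ (r : NNReal) (_ : IsCompact (Metric.closedBall z (r : ℝ))), (r : ENNReal)

def pseudoComponent {Z : Type*} [PseudoMetricSpace Z] (z₀ : Z) : Set Z :=
  {z | ∃ (n : ℕ) (w : ℕ → Z), w 0 = z₀ ∧ w n = z ∧
    ∀ i < n, ENNReal.ofReal (dist (w i) (w (i + 1))) < rho (w i)}

def PseudoConnected (Z : Type*) [PseudoMetricSpace Z] : Prop :=
  ∀ z₀ : Z, pseudoComponent z₀ = Set.univ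

open Metric

section PseudoComponent

variable {Z : Type*} [PseudoMetricSpace Z]

lemma ofReal_le_rho {z : Z} {r : ℝ} (hc : IsCompact (closedBall z r)) :
    ENNReal.ofReal r ≤ rho z := by
  rcases le_or_gt r 0 with hr | hr
  · simp [ENNReal.ofReal_eq_zero.2 hr]
  · refine le_iSup₂_of_le r.toNNReal (by rwa [Real.coe_toNNReal r hr.le]) ?_
    rfl

lemma self_mem_pseudoComponent (z₀ : Z) : z₀ ∈ pseudoComponent z₀ :=
  ⟨0, fun _ => z₀, rfl, rfl, by simp⟩

lemma mem_pseudoComponent_of_lt_rho {z₀ z t : Z} (hz : z ∈ pseudoComponent z₀)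
    (ht : ENNReal.ofReal (dist z t) < rho z) : t ∈ pseudoComponent z₀ := by
  obtain ⟨n, w, hw₀, hwn, hstep⟩ := hz
  refine ⟨n + 1, fun i => if i ≤ n then w i else t, by simp [hw₀], by simp, fun i hi => ?_⟩
  rcases lt_or_eq_of_le (Nat.le_of_lt_succ hi) with hin | rfl
  · simpa [hin.le, Nat.succ_le_of_lt hin] using hstep i hin
  · simpa [hwn] using ht

lemma ball_subset_pseudoComponent {z₀ z : Z} {r : ℝ} (hz : z ∈ pseudoComponent z₀)
    (hc : IsCompact (closedBall z r)) : ball z r ⊆ pseudoComponent z₀ := fun _ ht =>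
  mem_pseudoComponent_of_lt_rho hz <|
    ((ENNReal.ofReal_lt_ofReal_iff_of_nonneg dist_nonneg).2 (mem_ball'.1 ht)).trans_le
      (ofReal_le_rho hc)

variable [WeaklyLocallyCompactSpace Z]

lemma isOpen_pseudoComponent (z₀ : Z) : IsOpen (pseudoComponent z₀) := by
  refine isOpen_iff.2 fun z hz => ?_
  obtain ⟨r, hr, hc⟩ := exists_isCompact_closedBall z
  exact ⟨r, hr, ball_subset_pseudoComponent hz hc⟩

lemma isClosed_pseudoComponent (z₀ : Z) : IsClosed (pseudoComponent z₀) := by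
  refine isClosed_iff_clusterPt.2 fun z hz => ?_
  obtain ⟨r, hr, hc⟩ := exists_isCompact_closedBall z
  obtain ⟨u, hu, hzu⟩ := mem_closure_iff.1 (mem_closure_iff_clusterPt.2 hz) (r / 2) (by positivity)
  have hsub : closedBall u (r / 2) ⊆ closedBall z r :=
    closedBall_subset_closedBall' (by rw [dist_comm]; linarith)
  exact ball_subset_pseudoComponent hu (hc.of_isClosed_subset isClosed_closedBall hsub)
    (mem_ball.2 hzu)

lemma isClopen_pseudoComponent (z₀ : Z) : IsClopen (pseudoComponent z₀) :=
  ⟨isClosed_pseudoComponent z₀, isOpen_pseudoComponent z₀⟩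

lemma pseudoConnected_of_connectedSpace [ConnectedSpace Z] : PseudoConnected Z := fun z₀ =>
  (isClopen_pseudoComponent z₀).eq_univ ⟨z₀, self_mem_pseudoComponent z₀⟩

end PseudoComponent

theorem pseudoComponent_isOpen_isClosed
    {Z : Type} [MetricSpace Z] [LocallyCompactSpace Z] :
    (∀ z₀ : Z, IsOpen (pseudoComponent z₀) ∧ IsClosed (pseudoComponent z₀)) ∧
    (ConnectedSpace Z → PseudoConnected Z) :=
  ⟨fun z₀ => ⟨isOpen_pseudoComponent z₀, isClosed_pseudoComponent z₀⟩,
    fun _ => pseudoConnected_of_connectedSpace⟩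
end

section
/- Let (Z, d) be a metric space, let b ∈ Z, and let 0 ≤ r < r' be real numbers such that the closed ball B'_{r'}(b) = {x ∈ Z : d(x,b) ≤ r'} is compact. Then for every ε > 0 there exists δ > 0 such that every x ∈ Z with d(x, b) ≤ r + δ satisfies inf{d(x, y) : y ∈ B'_r(b)} < ε, where B'_r(b) = {y ∈ Z : d(y,b) ≤ r}. -/
open Metric

/-- On the compact set `closedBall b r' \ U` the distance to `b` attains a minimum, which
exceeds `r`. -/
theorem exists_closedBall_add_subset_of_isCompact_closedBall {Z : Type*} [MetricSpace Z]
    {b : Z} {r r' : ℝ} (hrr' : r < r') (hc : IsCompact (closedBall b r')) {U : Set Z}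
    (hU : IsOpen U) (hrU : closedBall b r ⊆ U) :
    ∃ δ > 0, closedBall b (r + δ) ⊆ U := by
  have hfar : ∀ x ∈ closedBall b r' \ U, r < dist x b := fun x hx ↦
    lt_of_not_ge fun hxr ↦ hx.2 (hrU hxr)
  obtain ⟨m, hrm, hm⟩ := (hc.diff hU).exists_forall_le'
    (continuous_id.dist continuous_const).continuousOn hfar
  refine ⟨min (m - r) (r' - r) / 2, by positivity, fun x hx ↦ ?_⟩
  have hxr : dist x b ≤ r + min (m - r) (r' - r) / 2 := hx
  by_contra hxU
  have hxm : m ≤ dist x b := hm x ⟨mem_closedBall.2 (by linarith [min_le_right (m - r) (r' - r)]), hxU⟩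
  linarith [min_le_left (m - r) (r' - r)]

theorem infDist_closedBall_small_of_compact_general
    {Z : Type} [MetricSpace Z] (b : Z) (r r' : ℝ) (hrr' : r < r')
    (hc : IsCompact (Metric.closedBall b r')) :
    ∀ ε : ℝ, 0 < ε → ∃ δ : ℝ, 0 < δ ∧
      ∀ x : Z, dist x b ≤ r + δ → Metric.infDist x (Metric.closedBall b r) < ε := by
  intro ε hε
  have hU : IsOpen {x | infDist x (closedBall b r) < ε} :=
    isOpen_lt (continuous_infDist_pt _) continuous_const
  have hrU : closedBall b r ⊆ {x | infDist x (closedBall b r) < ε} := fun x hx ↦ by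
    simpa [infDist_zero_of_mem hx] using hε
  obtain ⟨δ, hδ, hsub⟩ := exists_closedBall_add_subset_of_isCompact_closedBall hrr' hc hU hrU
  exact ⟨δ, hδ, fun x hx ↦ hsub hx⟩

theorem infDist_closedBall_small_of_compact
    {Z : Type} [MetricSpace Z] (b : Z) (r r' : ℝ) (hr : 0 ≤ r) (hrr' : r < r')
    (hc : IsCompact (Metric.closedBall b r')) :
    ∀ ε : ℝ, 0 < ε → ∃ δ : ℝ, 0 < δ ∧
      ∀ x : Z, dist x b ≤ r + δ → Metric.infDist x (Metric.closedBall b r) < ε :=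
  infDist_closedBall_small_of_compact_general b r r' hrr' hc
end

section
/- Let X be a complete metric space, let S ⊆ X be a dense subset, let x ∈ X and let r ∈ [0,∞). Then ρ(x) > r if and only if there exists r' > r such that the set {s ∈ S : d(s, x) < r'} is totally bounded. -/
open Metric

theorem ofReal_lt_rho_iff {Z : Type*} [PseudoMetricSpace Z] {z : Z} {r : ℝ} (hr : 0 ≤ r) :
    ENNReal.ofReal r < rho z ↔ ∃ r' > r, IsCompact (closedBall z r') := by
  simp only [rho, lt_iSup_iff, ENNReal.ofReal_lt_coe_iff hr]
  constructor
  · rintro ⟨r', hcompact, hr'⟩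
    exact ⟨r', hr', hcompact⟩
  · rintro ⟨r', hr', hcompact⟩
    exact ⟨⟨r', hr.trans hr'.le⟩, hcompact, hr'⟩

theorem Dense.isCompact_closedBall_of_totallyBounded_inter_ball {Z : Type*} [PseudoMetricSpace Z]
    [CompleteSpace Z] {S : Set Z} (hS : Dense S) {x : Z} {r r' : ℝ} (hrr' : r < r')
    (htb : TotallyBounded (S ∩ ball x r')) : IsCompact (closedBall x r) := by
  have hsub : closedBall x r ⊆ closure (S ∩ ball x r') := by
    rw [Set.inter_comm]
    exact (closedBall_subset_ball hrr').trans (hS.open_subset_closure_inter isOpen_ball)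
  exact (htb.closure.isCompact_of_isClosed isClosed_closure).of_isClosed_subset
    isClosed_closedBall hsub

theorem rho_gt_iff_totallyBounded_dense
    {X : Type} [MetricSpace X] [CompleteSpace X] (S : Set X) (hS : Dense S)
    (x : X) (r : ℝ) (hr : 0 ≤ r) :
    ENNReal.ofReal r < rho x ↔
      ∃ r' : ℝ, r < r' ∧ TotallyBounded {s : X | s ∈ S ∧ dist s x < r'} := by
  rw [ofReal_lt_rho_iff hr]
  constructor
  · rintro ⟨r', hrr', hcompact⟩
    exact ⟨r', hrr', hcompact.totallyBounded.subset fun s hs => mem_closedBall.2 hs.2.le⟩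
  · rintro ⟨r', hrr', htb⟩
    obtain ⟨r'', hrr'', hr''r'⟩ := exists_between hrr'
    exact ⟨r'', hrr'', hS.isCompact_closedBall_of_totallyBounded_inter_ball hr''r' htb⟩
end
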